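/- If B is admissible with some ε ∈ (0,1), then μ = max{|b| : b ∈ B} satisfies μ ≥ ⌊√|Δ|/2⌋. -/

import Mathlib

noncomputable section

namespace CFNE

/-- τ = (Δ + i·√|Δ|)/2. -/
def tau (Δ : ℤ) : ℂ := ((Δ : ℂ) + Complex.I * (Real.sqrt |(Δ : ℝ)|)) / 2

/-- The imaginary quadratic order 𝒪 = ℤ[τ] of discriminant Δ, as a subring of ℂ. -/
def O (Δ : ℤ) : Subring ℂ := Subring.closure {tau Δ}

/-- A (nonzero or zero) ideal of 𝒪, presented as a subset of ℂ. -/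
structure IdealS (Δ : ℤ) where
  carrier : Set ℂ
  subset : carrier ⊆ (O Δ : Set ℂ)
  zero_mem : (0 : ℂ) ∈ carrier
  add_mem : ∀ x ∈ carrier, ∀ y ∈ carrier, x + y ∈ carrier
  neg_mem : ∀ x ∈ carrier, -x ∈ carrier
  smul_mem : ∀ r ∈ (O Δ : Set ℂ), ∀ x ∈ carrier, r * x ∈ carrier

/-- The ideal as an additive subgroup of ℂ. -/
def IdealS.toAddSubgroup {Δ : ℤ} (I : IdealS Δ) : AddSubgroup ℂ where
  carrier := I.carrier
  zero_mem' := I.zero_mem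
  add_mem' := fun hx hy => I.add_mem _ hx _ hy
  neg_mem' := fun hx => I.neg_mem _ hx

/-- The norm of an ideal: the index [𝒪 : 𝔟]. -/
def IdealS.norm {Δ : ℤ} (I : IdealS Δ) : ℕ :=
  I.toAddSubgroup.relIndex (O Δ).toAddSubgroup

/-- The ideal is nonzero. -/
def IdealS.Nonzero {Δ : ℤ} (I : IdealS Δ) : Prop := ∃ x ∈ I.carrier, x ≠ 0

/-- Two nonzero ideals lie in the same class if x·𝔞 = y·𝔟 for some nonzero x, y ∈ 𝒪. -/
def SameClass {Δ : ℤ} (I J : IdealS Δ) : Prop :=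
  ∃ x ∈ (O Δ : Set ℂ), ∃ y ∈ (O Δ : Set ℂ), x ≠ 0 ∧ y ≠ 0 ∧
    (fun t => x * t) '' I.carrier = (fun t => y * t) '' J.carrier

/-- A reduced ideal: a nonzero ideal of minimal norm in its ideal class. -/
def IsReduced {Δ : ℤ} (I : IdealS Δ) : Prop :=
  I.Nonzero ∧ ∀ J : IdealS Δ, J.Nonzero → SameClass I J → I.norm ≤ J.norm

/-- The inverse fractional ideal 𝔟⁻¹ = {x ∈ ℂ : x·𝔟 ⊆ 𝒪}. -/
def invSet {Δ : ℤ} (I : IdealS Δ) : Set ℂ :=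
  {x : ℂ | ∀ y ∈ I.carrier, x * y ∈ (O Δ : Set ℂ)}

/-- The fractional ideal a·𝔟 + b·𝔟⁻¹, as a subset of ℂ. -/
def combSet {Δ : ℤ} (I : IdealS Δ) (a b : ℂ) : Set ℂ :=
  {u : ℂ | ∃ s ∈ I.carrier, ∃ t ∈ invSet I, u = a * s + b * t}

/-- The ideal x·𝒪 + y·𝒪 of 𝒪 generated by x and y, as a subset of ℂ. -/
def genSet (Δ : ℤ) (x y : ℂ) : Set ℂ :=
  {u : ℂ | ∃ s ∈ (O Δ : Set ℂ), ∃ t ∈ (O Δ : Set ℂ), u = x * s + y * t}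

/-- The set is the carrier of a reduced ideal of 𝒪. -/
def IsReducedSet (Δ : ℤ) (S : Set ℂ) : Prop :=
  ∃ J : IdealS Δ, IsReduced J ∧ J.carrier = S

/-- B is admissible with ε ∈ (0,1): B is a nonempty finite subset of 𝒪 ∖ {0}, and for every
reduced ideal 𝔟 with 𝔟 ∩ B ≠ ∅, the discs D(a/b, ε/|b|) over b ∈ 𝔟 ∩ B, a ∈ 𝔟⁻¹ with
a·𝔟 + b·𝔟⁻¹ reduced, cover ℂ. -/
def Admissible (Δ : ℤ) (B : Set ℂ) (ε : ℝ) : Prop :=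
  B.Nonempty ∧ B.Finite ∧ B ⊆ (O Δ : Set ℂ) ∧ (0 : ℂ) ∉ B ∧
  ∀ I : IdealS Δ, IsReduced I → (I.carrier ∩ B).Nonempty →
    ∀ z : ℂ, ∃ b ∈ I.carrier ∩ B, ∃ a ∈ invSet I,
      IsReducedSet Δ (combSet I a b) ∧ ‖z - a / b‖ ≤ ε / ‖b‖

/-- μ = max{|b| : b ∈ B}. -/
def mu (B : Set ℂ) : ℝ := sSup ((fun w : ℂ => ‖w‖) '' B)

/-- A run of the continued fraction algorithm of length N ∈ ℕ ∪ {∞} on input z. -/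
structure Run (Δ : ℤ) (B : Set ℂ) (ε : ℝ) (z : ℂ) (N : ℕ∞) where
  a : ℤ → ℂ
  b : ℤ → ℂ
  p : ℤ → ℂ
  q : ℤ → ℂ
  zs : ℤ → ℂ
  b_zero : b 0 = 1
  p_neg_one : p (-1) = 0
  q_neg_one : q (-1) = 1
  p_zero : p 0 = 1
  q_zero : q 0 = 0
  zs_zero : zs 0 = z
  ha : ∀ n : ℕ, 1 ≤ n → (n : ℕ∞) ≤ N → a n ∈ O Δ
  hb : ∀ n : ℕ, 1 ≤ n → (n : ℕ∞) ≤ N → b n ∈ B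
  hne : ∀ n : ℕ, 1 ≤ n → (n : ℕ∞) ≤ N → b n * zs ((n : ℤ) - 1) - a n ≠ 0
  hclose : ∀ n : ℕ, 1 ≤ n → (n : ℕ∞) ≤ N →
    ‖b n * zs ((n : ℤ) - 1) - a n‖ ≤ ε * ‖b ((n : ℤ) - 1)‖
  hp : ∀ n : ℕ, 1 ≤ n → (n : ℕ∞) ≤ N →
    p n = (a n * p ((n : ℤ) - 1) + b n * p ((n : ℤ) - 2)) / b ((n : ℤ) - 1)
  hq : ∀ n : ℕ, 1 ≤ n → (n : ℕ∞) ≤ N →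
    q n = (a n * q ((n : ℤ) - 1) + b n * q ((n : ℤ) - 2)) / b ((n : ℤ) - 1)
  hz : ∀ n : ℕ, 1 ≤ n → (n : ℕ∞) ≤ N →
    zs n = b ((n : ℤ) - 1) / (b n * zs ((n : ℤ) - 1) - a n)
  hpO : ∀ n : ℕ, 1 ≤ n → (n : ℕ∞) ≤ N → p n ∈ O Δ
  hqO : ∀ n : ℕ, 1 ≤ n → (n : ℕ∞) ≤ N → q n ∈ O Δ
  hred : ∀ n : ℕ, 1 ≤ n → (n : ℕ∞) ≤ N → IsReducedSet Δ (genSet Δ (p n) (q n))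

/-!
The unit ideal 𝒪 is reduced, since every nonzero ideal contains a nonzero rational
integer and so has finite index. Write `H = Im τ = √|Δ|/2` and `m = ⌊H⌋`, and apply the covering
property of `B` for `𝔟 = 𝒪` at the point `z = i·H/m`: it gives `b ∈ B` and `a ∈ 𝒪` with
`|b z - a| ≤ ε < 1`. If `μ < m`, then `|b| < H` forces `b` to be a nonzero rational integer with
`|b| < m`, while `Im (b z - a) = (H/m)·(b - m·v)` for an integer `v`; as `m ∤ b`, this has
absolute value at least `H/m ≥ 1`.
-/

section

variable {Δ : ℤ}

lemma tau_im : (tau Δ).im = √|(Δ : ℝ)| / 2 := by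
  simp [tau]

lemma tau_im_pos (hΔ : Δ < 0) : 0 < (tau Δ).im := by
  rw [tau_im]
  have : (0 : ℝ) < |(Δ : ℝ)| := abs_pos.mpr (by exact_mod_cast hΔ.ne)
  positivity

lemma tau_mem_O : tau Δ ∈ O Δ :=
  Subring.subset_closure rfl

lemma four_dvd_sq_sub_self (hΔmod : Δ % 4 = 0 ∨ Δ % 4 = 1) : 4 ∣ Δ ^ 2 - Δ := by
  have h : Δ ^ 2 - Δ = Δ * (Δ - 1) := by ring
  rw [h, Int.dvd_iff_emod_eq_zero, Int.mul_emod, Int.sub_emod]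
  rcases hΔmod with h | h <;> simp [h]

lemma tau_sq (hΔ : Δ ≤ 0) (hΔmod : Δ % 4 = 0 ∨ Δ % 4 = 1) :
    tau Δ ^ 2 = Δ * tau Δ - (((Δ ^ 2 - Δ) / 4 : ℤ) : ℂ) := by
  have hsqrt : ((√|(Δ : ℝ)| : ℝ) : ℂ) ^ 2 = -Δ := by
    rw [← Complex.ofReal_pow, Real.sq_sqrt (abs_nonneg _), abs_of_nonpos (by exact_mod_cast hΔ)]
    push_cast; ring
  have hc : (((Δ ^ 2 - Δ) / 4 : ℤ) : ℂ) * 4 = Δ ^ 2 - Δ := by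
    exact_mod_cast Int.ediv_mul_cancel (four_dvd_sq_sub_self hΔmod)
  have hI : (Complex.I * (√|(Δ : ℝ)| : ℂ)) ^ 2 = Δ := by
    rw [mul_pow, Complex.I_sq, hsqrt]; ring
  unfold tau
  linear_combination (hI + hc) / 4

lemma im_intCast_add_mul_tau (j k : ℤ) : ((j : ℂ) + k * tau Δ).im = k * (tau Δ).im := by
  simp

lemma intCast_add_mul_tau_eq_zero (hΔ : Δ < 0) {j k : ℤ} (h : (j : ℂ) + k * tau Δ = 0) :
    j = 0 ∧ k = 0 := by
  have hk : k = 0 := by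
    have := congrArg Complex.im h
    rw [im_intCast_add_mul_tau, Complex.zero_im] at this
    exact_mod_cast (mul_eq_zero.mp this).resolve_right (tau_im_pos hΔ).ne'
  subst hk
  exact ⟨by simpa using h, rfl⟩

lemma mem_O_iff (hΔ : Δ ≤ 0) (hΔmod : Δ % 4 = 0 ∨ Δ % 4 = 1) {x : ℂ} :
    x ∈ O Δ ↔ ∃ j k : ℤ, (j : ℂ) + k * tau Δ = x := by
  refine ⟨fun hx => ?_, fun ⟨j, k, hx⟩ => hx ▸ add_mem (intCast_mem _ j)
    (mul_mem (intCast_mem _ k) tau_mem_O)⟩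
  induction hx using Subring.closure_induction with
  | mem x hx => exact ⟨0, 1, by rw [Set.mem_singleton_iff.mp hx]; push_cast; ring⟩
  | zero => exact ⟨0, 0, by push_cast; ring⟩
  | one => exact ⟨1, 0, by push_cast; ring⟩
  | add x y _ _ hx hy =>
    obtain ⟨⟨j, k, rfl⟩, ⟨j', k', rfl⟩⟩ := And.intro hx hy
    exact ⟨j + j', k + k', by push_cast; ring⟩
  | neg x _ hx =>
    obtain ⟨j, k, rfl⟩ := hx
    exact ⟨-j, -k, by push_cast; ring⟩
  | mul x y _ _ hx hy =>
    obtain ⟨⟨j, k, rfl⟩, ⟨j', k', rfl⟩⟩ := And.intro hx hy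
    refine ⟨j * j' - k * k' * ((Δ ^ 2 - Δ) / 4), j * k' + k * j' + k * k' * Δ, ?_⟩
    push_cast
    linear_combination (-(k : ℂ) * k') * tau_sq hΔ hΔmod

def basisHom (Δ : ℤ) : ℤ × ℤ →+ ℂ where
  toFun p := p.1 + p.2 * tau Δ
  map_zero' := by simp
  map_add' p q := by simp only [Prod.fst_add, Prod.snd_add]; push_cast; ring

lemma range_basisHom (hΔ : Δ ≤ 0) (hΔmod : Δ % 4 = 0 ∨ Δ % 4 = 1) :
    (basisHom Δ).range = (O Δ).toAddSubgroup := by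
  ext x
  simp [basisHom, mem_O_iff hΔ hΔmod]

/-- The witness `y` is the conjugate `(j + kΔ) - kτ` of `x = j + kτ`. -/
lemma exists_mul_eq_intCast (hΔ : Δ < 0) (hΔmod : Δ % 4 = 0 ∨ Δ % 4 = 1) {x : ℂ}
    (hx : x ∈ O Δ) (hx0 : x ≠ 0) : ∃ N : ℤ, N ≠ 0 ∧ ∃ y ∈ O Δ, y * x = N := by
  obtain ⟨j, k, rfl⟩ := (mem_O_iff hΔ.le hΔmod).mp hx
  set y : ℂ := ((j + k * Δ : ℤ) : ℂ) + ((-k : ℤ) : ℂ) * tau Δ with hy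
  have hyx : y * (j + k * tau Δ) = ((j ^ 2 + Δ * j * k + (Δ ^ 2 - Δ) / 4 * k ^ 2 : ℤ) : ℂ) := by
    rw [hy]; push_cast
    linear_combination (-(k : ℂ) ^ 2) * tau_sq hΔ.le hΔmod
  refine ⟨_, fun hN => ?_, y, (mem_O_iff hΔ.le hΔmod).mpr ⟨_, _, rfl⟩, hyx⟩
  rw [hN, Int.cast_zero, mul_eq_zero, or_iff_left hx0] at hyx
  obtain ⟨hjk, hk⟩ := intCast_add_mul_tau_eq_zero hΔ hyx
  apply hx0
  simp_all

lemma IdealS.norm_ne_zero (hΔ : Δ < 0) (hΔmod : Δ % 4 = 0 ∨ Δ % 4 = 1) {J : IdealS Δ}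
    (hJ : J.Nonzero) : J.norm ≠ 0 := by
  obtain ⟨x, hxJ, hx0⟩ := hJ
  obtain ⟨N, hN, y, hy, hyx⟩ := exists_mul_eq_intCast hΔ hΔmod (J.subset hxJ) hx0
  have hNJ : (N : ℂ) ∈ J.carrier := hyx ▸ J.smul_mem y hy x hxJ
  have : NeZero N.natAbs := ⟨Int.natAbs_ne_zero.mpr hN⟩
  let ψ := (Int.castAddHom (ZMod N.natAbs)).prodMap (Int.castAddHom (ZMod N.natAbs))
  have hker : ψ.ker ≤ J.toAddSubgroup.comap (basisHom Δ) := by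
    rintro ⟨j, k⟩ hjk
    obtain ⟨⟨u, rfl⟩, ⟨v, rfl⟩⟩ : N ∣ j ∧ N ∣ k := by
      simpa [ψ, Prod.ext_iff, ZMod.intCast_zmod_eq_zero_iff_dvd] using hjk
    have hNuv : basisHom Δ (N * u, N * v) = (u + v * tau Δ) * N := by
      simp only [basisHom, AddMonoidHom.coe_mk, ZeroHom.coe_mk]; push_cast; ring
    show basisHom Δ (N * u, N * v) ∈ J.carrier
    rw [hNuv]
    exact J.smul_mem _ ((mem_O_iff hΔ.le hΔmod).mpr ⟨u, v, rfl⟩) _ hNJ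
  rw [IdealS.norm, ← range_basisHom hΔ.le hΔmod, ← AddSubgroup.index_comap]
  exact (AddSubgroup.finiteIndex_of_le hker).index_ne_zero

def unitIdeal (Δ : ℤ) : IdealS Δ where
  carrier := O Δ
  subset := le_rfl
  zero_mem := zero_mem _
  add_mem _ hx _ hy := add_mem hx hy
  neg_mem _ hx := neg_mem hx
  smul_mem _ hr _ hx := mul_mem hr hx

lemma unitIdeal_norm : (unitIdeal Δ).norm = 1 :=
  AddSubgroup.relIndex_self _

lemma unitIdeal_isReduced (hΔ : Δ < 0) (hΔmod : Δ % 4 = 0 ∨ Δ % 4 = 1) :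
    IsReduced (unitIdeal Δ) :=
  ⟨⟨1, one_mem _, one_ne_zero⟩, fun _ hJ _ =>
    unitIdeal_norm.trans_le (Nat.one_le_iff_ne_zero.mpr (IdealS.norm_ne_zero hΔ hΔmod hJ))⟩

lemma mem_O_of_mem_invSet_unitIdeal {a : ℂ} (ha : a ∈ invSet (unitIdeal Δ)) : a ∈ O Δ := by
  simpa using ha 1 (one_mem _)

lemma exists_eq_intCast_of_norm_lt (hΔ : Δ < 0) (hΔmod : Δ % 4 = 0 ∨ Δ % 4 = 1) {b : ℂ}
    (hb : b ∈ O Δ) (hbH : ‖b‖ < (tau Δ).im) : ∃ j : ℤ, b = j := by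
  obtain ⟨j, k, rfl⟩ := (mem_O_iff hΔ.le hΔmod).mp hb
  suffices k = 0 by exact ⟨j, by simp [this]⟩
  by_contra hk
  have hH := tau_im_pos hΔ
  have : (tau Δ).im ≤ |(k : ℝ)| * (tau Δ).im :=
    le_mul_of_one_le_left hH.le (by exact_mod_cast Int.one_le_abs hk)
  have := Complex.abs_im_le_norm ((j : ℂ) + k * tau Δ)
  rw [im_intCast_add_mul_tau, abs_mul, abs_of_pos hH] at this
  linarith

lemma one_le_norm_mul_sub (hΔ : Δ < 0) (hΔmod : Δ % 4 = 0 ∨ Δ % 4 = 1) {a b : ℂ}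
    (ha : a ∈ O Δ) (hb : b ∈ O Δ) (hb0 : b ≠ 0) (hbm : ‖b‖ < ⌊(tau Δ).im⌋) :
    1 ≤ ‖b * (Complex.I * ((tau Δ).im / ⌊(tau Δ).im⌋ : ℝ)) - a‖ := by
  set H := (tau Δ).im
  set m := ⌊H⌋
  have hmH : (m : ℝ) ≤ H := Int.floor_le H
  have hm : (0 : ℝ) < m := (norm_nonneg b).trans_lt hbm
  obtain ⟨j, rfl⟩ := exists_eq_intCast_of_norm_lt hΔ hΔmod hb (hbm.trans_le hmH)
  obtain ⟨u, v, rfl⟩ := (mem_O_iff hΔ.le hΔmod).mp ha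
  have hjvm : j - v * m ≠ 0 := by
    intro h
    have hj : m ∣ j := ⟨v, by linarith⟩
    have hjm : |j| < m := by simpa [← Int.cast_abs] using hbm
    exact hb0 (by simp [Int.eq_zero_of_abs_lt_dvd hj hjm])
  have him : (j * (Complex.I * (H / m : ℝ)) - (u + v * tau Δ)).im = H / m * (j - v * m) := by
    simp [H]
    field_simp
  have hHm : 1 ≤ H / m := (one_le_div hm).mpr hmH
  calc (1 : ℝ) ≤ H / m * 1 := by rwa [mul_one]
    _ ≤ H / m * |(j : ℝ) - v * m| :=
        mul_le_mul_of_nonneg_left (by exact_mod_cast Int.one_le_abs hjvm) (by linarith)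
    _ = |(j * (Complex.I * (H / m : ℝ)) - (u + v * tau Δ)).im| := by
        rw [him, abs_mul, abs_of_pos (show 0 < H / m by linarith)]
    _ ≤ _ := Complex.abs_im_le_norm _

end

theorem stmt19_general (Δ : ℤ) (hΔneg : Δ < 0) (hΔmod : Δ % 4 = 0 ∨ Δ % 4 = 1)
    (B : Set ℂ) (ε : ℝ) (hε1 : ε < 1) (hadm : Admissible Δ B ε) :
    ((⌊Real.sqrt |(Δ : ℝ)| / 2⌋ : ℤ) : ℝ) ≤ mu B := by
  obtain ⟨⟨b₀, hb₀⟩, hfin, hBO, h0B, hcover⟩ := hadm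
  have hmu : ∀ b ∈ B, ‖b‖ ≤ mu B := fun b hb => le_csSup (hfin.image _).bddAbove ⟨b, hb, rfl⟩
  rw [← tau_im]
  by_contra! hlt
  obtain ⟨b, ⟨hbO, hbB⟩, a, ha, -, hdist⟩ :=
    hcover (unitIdeal Δ) (unitIdeal_isReduced hΔneg hΔmod) ⟨b₀, hBO hb₀, hb₀⟩
      (Complex.I * ((tau Δ).im / ⌊(tau Δ).im⌋ : ℝ))
  have hb0 : b ≠ 0 := fun h => h0B (h ▸ hbB)
  have hfar := one_le_norm_mul_sub hΔneg hΔmod (mem_O_of_mem_invSet_unitIdeal ha) hbO hb0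
    ((hmu b hbB).trans_lt hlt)
  have hnear : ‖b * (Complex.I * ((tau Δ).im / ⌊(tau Δ).im⌋ : ℝ)) - a‖ ≤ ε := by
    rw [← mul_div_cancel₀ a hb0, ← mul_sub, norm_mul]
    calc ‖b‖ * _ ≤ ‖b‖ * (ε / ‖b‖) := by gcongr
      _ = ε := mul_div_cancel₀ ε (norm_ne_zero_iff.mpr hb0)
  linarith

theorem stmt19 (Δ : ℤ) (hΔneg : Δ < 0) (hΔmod : Δ % 4 = 0 ∨ Δ % 4 = 1)
    (B : Set ℂ) (ε : ℝ) (hε0 : 0 < ε) (hε1 : ε < 1) (hadm : Admissible Δ B ε) :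
    ((⌊Real.sqrt |(Δ : ℝ)| / 2⌋ : ℤ) : ℝ) ≤ mu B :=
  stmt19_general Δ hΔneg hΔmod B ε hε1 hadm

end CFNE
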